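/- For every GFG alternating automaton over finite words A with n states there exists a DFA with at most n states that is equivalent to A (recognizes L(A)). -/

import Mathlib

set_option maxHeartbeats 1000000

namespace GFG

/-- Positive boolean formulas over `Q`. -/
inductive PB (Q : Type) : Type
  | atom : Q → PB Q
  | and : PB Q → PB Q → PB Q
  | or : PB Q → PB Q → PB Q

namespace PB
variable {Q R : Type}

/-- Satisfaction of a positive boolean formula by a truth assignment. -/
def sat : PB Q → (Q → Prop) → Prop
  | atom q, v => v q
  | and b b', v => b.sat v ∧ b'.sat v
  | or b b', v => b.sat v ∨ b'.sat v

/-- Two positive boolean formulas are equivalent if they are satisfied by exactly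
the same truth assignments. -/
def Equiv (b b' : PB Q) : Prop := ∀ v : Q → Prop, b.sat v ↔ b'.sat v

/-- Dualization: swap conjunctions and disjunctions. -/
def dual : PB Q → PB Q
  | atom q => atom q
  | and b b' => or b.dual b'.dual
  | or b b' => and b.dual b'.dual

/-- The formula is a conjunction of atoms. -/
def IsConj : PB Q → Prop
  | atom _ => True
  | and b b' => b.IsConj ∧ b'.IsConj
  | or _ _ => False

/-- The formula is a disjunction of atoms. -/
def IsDisj : PB Q → Prop
  | atom _ => True
  | and _ _ => False
  | or b b' => b.IsDisj ∧ b'.IsDisj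

/-- The formula is a single atom. -/
def IsAtom : PB Q → Prop
  | atom _ => True
  | _ => False

/-- The formula is in disjunctive normal form: a disjunction of conjunctions of atoms. -/
def IsDNF : PB Q → Prop
  | atom _ => True
  | and b b' => b.IsConj ∧ b'.IsConj
  | or b b' => b.IsDNF ∧ b'.IsDNF

/-- The set of atoms occurring in a formula. -/
def atomsOf : PB Q → Set Q
  | atom q => {q}
  | and b b' => b.atomsOf ∪ b'.atomsOf
  | or b b' => b.atomsOf ∪ b'.atomsOf

/-- `some q` if the formula is the atom `q`, else `none`. -/
def theAtom? : PB Q → Option Q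
  | atom q => some q
  | _ => none

/-- Substitution of formulas for atoms. -/
def bind : PB Q → (Q → PB R) → PB R
  | atom q, f => f q
  | and b b', f => and (b.bind f) (b'.bind f)
  | or b b', f => or (b.bind f) (b'.bind f)

/-- The list of subformulas of a formula. -/
def subs : PB Q → List (PB Q)
  | atom q => [atom q]
  | and b b' => and b b' :: (b.subs ++ b'.subs)
  | or b b' => or b b' :: (b.subs ++ b'.subs)

end PB

/-- A deterministic parity automaton over the alphabet `Γ`. -/
structure DPA (Γ : Type) : Type 1 where
  P : Type
  [finP : Finite P]
  [neP : Nonempty P]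
  p0 : P
  eta : P → Γ → P
  c : P → ℕ

attribute [instance] DPA.finP DPA.neP

/-- The run of a deterministic parity automaton on an infinite word. -/
def DPA.run {Γ : Type} (D : DPA Γ) (x : ℕ → Γ) : ℕ → D.P
  | 0 => D.p0
  | n + 1 => D.eta (D.run x n) (x n)

/-- A deterministic parity automaton accepts `x` iff the largest priority seen
infinitely often along the run is even. -/
def DPA.Accepts {Γ : Type} (D : DPA Γ) (x : ℕ → Γ) : Prop :=
  ∃ k, Even k ∧ {n | D.c (D.run x n) = k}.Infinite ∧
    ∀ j, k < j → {n | D.c (D.run x n) = j}.Finite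

/-- A set of infinite words over `Γ` is ω-regular iff it is recognized by some
deterministic parity automaton. -/
def OmegaRegular {Γ : Type} (W : Set (ℕ → Γ)) : Prop :=
  ∃ D : DPA Γ, ∀ x, x ∈ W ↔ D.Accepts x

/-- An alternating word automaton with states labeled into `Γ` and acceptance set
`W ⊆ Γ^ω`. -/
structure AltAutomaton (Sig Γ : Type) : Type 1 where
  Q : Type
  [finQ : Finite Q]
  [neQ : Nonempty Q]
  init : Q
  delta : Q → Sig → PB Q
  label : Q → Γ
  W : Set (ℕ → Γ)

attribute [instance] AltAutomaton.finQ AltAutomaton.neQ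

/-- A two-player win/lose game of infinite duration, given by a move relation,
ownership of positions (`eve p` iff `p` belongs to Eve), an initial position, and
a winning condition for Eve on plays. -/
structure Game (Pos : Type) where
  move : Pos → Pos → Prop
  eve : Pos → Prop
  init : Pos
  win : (ℕ → Pos) → Prop

namespace Game
variable {Pos : Type} (G : Game Pos)

/-- A play: an infinite sequence of successive positions starting at the initial position. -/
def IsPlay (p : ℕ → Pos) : Prop := p 0 = G.init ∧ ∀ n, G.move (p n) (p (n + 1))

/-- The history of a play up to (and including) time `n`. -/
def histOf (p : ℕ → Pos) (n : ℕ) : List Pos := (List.range (n + 1)).map p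

/-- A valid finite history: a finite sequence of successive positions from the
initial position. -/
def IsHist (l : List Pos) : Prop := l.head? = some G.init ∧ l.Chain' G.move

/-- The play `p` agrees with the strategy `σ` of Eve. -/
def AgreesE (σ : List Pos → Pos) (p : ℕ → Pos) : Prop :=
  ∀ n, G.eve (p n) → p (n + 1) = σ (histOf p n)

/-- The play `p` agrees with the strategy `σ` of Adam. -/
def AgreesA (σ : List Pos → Pos) (p : ℕ → Pos) : Prop :=
  ∀ n, ¬ G.eve (p n) → p (n + 1) = σ (histOf p n)

/-- `σ` is a winning strategy for Eve: it proposes legal moves at all of Eve's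
positions reachable along valid histories, and every play agreeing with it is won by Eve. -/
def WinsEve (σ : List Pos → Pos) : Prop :=
  (∀ (l : List Pos) (x : Pos), G.IsHist (l ++ [x]) → G.eve x → G.move x (σ (l ++ [x]))) ∧
  (∀ p, G.IsPlay p → G.AgreesE σ p → G.win p)

/-- `σ` is a winning strategy for Adam. -/
def WinsAdam (σ : List Pos → Pos) : Prop :=
  (∀ (l : List Pos) (x : Pos), G.IsHist (l ++ [x]) → ¬ G.eve x → G.move x (σ (l ++ [x]))) ∧
  (∀ p, G.IsPlay p → G.AgreesA σ p → ¬ G.win p)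

/-- Eve has a winning strategy in `G`. -/
def EveWins : Prop := ∃ σ, G.WinsEve σ

/-- Adam has a winning strategy in `G`. -/
def AdamWins : Prop := ∃ σ, G.WinsAdam σ

end Game

/-- `s` is the subsequence of values selected by `sel` along `p`,
in order and exhaustively. -/
def IsSubseqOn {X Y : Type} (sel : X → Option Y) (p : ℕ → X) (s : ℕ → Y) : Prop :=
  ∃ ix : ℕ → ℕ, StrictMono ix ∧ (∀ n, sel (p (ix n)) = some (s n)) ∧
    ∀ m, (sel (p m)).isSome → ∃ n, ix n = m

variable {Sig Gam : Type}

/-- Moves of the model-checking game `G(w, A)`. -/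
def mcMove (A : AltAutomaton Sig Gam) (w : ℕ → Sig) :
    (ℕ × PB A.Q) → (ℕ × PB A.Q) → Prop
  | (i, PB.atom q), (j, b) => j = i + 1 ∧ b = A.delta q (w i)
  | (i, PB.and b b'), (j, c) => j = i ∧ (c = b ∨ c = b')
  | (i, PB.or b b'), (j, c) => j = i ∧ (c = b ∨ c = b')

/-- The model-checking (membership) game `G(w, A)`. Disjunction positions belong to Eve;
conjunction and atom positions (the latter having a unique successor) belong to Adam.
Eve wins a play iff its state-sequence satisfies the acceptance condition. -/
def mcGame (A : AltAutomaton Sig Gam) (w : ℕ → Sig) : Game (ℕ × PB A.Q) where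
  move := mcMove A w
  eve := fun p => match p.2 with
    | PB.or _ _ => True
    | _ => False
  init := (0, PB.atom A.init)
  win := fun p => ∀ ρ : ℕ → A.Q, IsSubseqOn (fun x => x.2.theAtom?) p ρ →
    (fun n => A.label (ρ n)) ∈ A.W

/-- `A` accepts `w` iff Eve has a winning strategy in the model-checking game. -/
def AltAutomaton.Accepts (A : AltAutomaton Sig Gam) (w : ℕ → Sig) : Prop :=
  (mcGame A w).EveWins

/-- The language of `A`. -/
def AltAutomaton.lang (A : AltAutomaton Sig Gam) : Set (ℕ → Sig) :=
  {w | A.Accepts w}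

/-- A uniform strategy: a function of the word prefix read so far and the sequence of
transition conditions visited so far. -/
abbrev UStrat (Sig Q : Type) := List Sig → List (PB Q) → PB Q

/-- The prefix `w₀ … w_{i-1}` of an infinite word. -/
def wordPrefix (w : ℕ → Sig) (i : ℕ) : List Sig := (List.range i).map w

/-- The strategy in the model-checking game `G(w, A)` induced by following the uniform
strategy `τ` (at atom positions it takes the unique move). -/
def follow (A : AltAutomaton Sig Gam) (w : ℕ → Sig) (τ : UStrat Sig A.Q)
    (hs : List (ℕ × PB A.Q)) : ℕ × PB A.Q :=
  match hs.getLast?.getD (0, PB.atom A.init) with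
  | (i, PB.atom q) => (i + 1, A.delta q (w i))
  | (i, PB.and _ _) => (i, τ (wordPrefix w i) (hs.map Prod.snd))
  | (i, PB.or _ _) => (i, τ (wordPrefix w i) (hs.map Prod.snd))

/-- The nondeterminism in `A` is history-deterministic. -/
def NondetHD (A : AltAutomaton Sig Gam) : Prop :=
  ∃ τ : UStrat Sig A.Q, ∀ w ∈ A.lang, (mcGame A w).WinsEve (follow A w τ)

/-- The universality in `A` is history-deterministic. -/
def UnivHD (A : AltAutomaton Sig Gam) : Prop :=
  ∃ τ : UStrat Sig A.Q, ∀ w ∉ A.lang, (mcGame A w).WinsAdam (follow A w τ)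

/-- `A` is history-deterministic. -/
def HistoryDet (A : AltAutomaton Sig Gam) : Prop := NondetHD A ∧ UnivHD A

/-- Moves of the letter games: at an atom a letter is picked and the transition condition
is unfolded, at conjunctions and disjunctions a subformula is picked (with empty letter). -/
def letterMove (A : AltAutomaton Sig Gam) :
    (Option Sig × PB A.Q) → (Option Sig × PB A.Q) → Prop
  | (_, PB.atom q), (σ, b) => ∃ a : Sig, σ = some a ∧ b = A.delta q a
  | (_, PB.and b b'), (σ, c) => σ = none ∧ (c = b ∨ c = b')
  | (_, PB.or b b'), (σ, c) => σ = none ∧ (c = b ∨ c = b')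

/-- Eve's letter game: Adam picks the letters and resolves conjunctions, Eve resolves
disjunctions. Eve wins a play iff the word played is not in `L(A)` or the state-sequence
satisfies the acceptance condition. -/
def eveLetterGame (A : AltAutomaton Sig Gam) : Game (Option Sig × PB A.Q) where
  move := letterMove A
  eve := fun p => match p.2 with
    | PB.or _ _ => True
    | _ => False
  init := (none, PB.atom A.init)
  win := fun p => ∀ (w : ℕ → Sig) (ρ : ℕ → A.Q),
    IsSubseqOn (fun x => x.1) p w → IsSubseqOn (fun x => x.2.theAtom?) p ρ →
    (w ∉ A.lang ∨ (fun n => A.label (ρ n)) ∈ A.W)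

/-- Adam's letter game: Eve picks the letters and resolves disjunctions, Adam resolves
conjunctions. Adam wins a play iff the word played is in `L(A)` or the state-sequence does
not satisfy the acceptance condition (stated below as Eve's winning condition, negated). -/
def adamLetterGame (A : AltAutomaton Sig Gam) : Game (Option Sig × PB A.Q) where
  move := letterMove A
  eve := fun p => match p.2 with
    | PB.and _ _ => False
    | _ => True
  init := (none, PB.atom A.init)
  win := fun p => ∀ (w : ℕ → Sig) (ρ : ℕ → A.Q),
    IsSubseqOn (fun x => x.1) p w → IsSubseqOn (fun x => x.2.theAtom?) p ρ →
    (w ∉ A.lang ∧ (fun n => A.label (ρ n)) ∈ A.W)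

/-- The strategy in a letter game induced by following the uniform strategy `τ`. -/
def letterFollow (A : AltAutomaton Sig Gam) (τ : UStrat Sig A.Q)
    (hs : List (Option Sig × PB A.Q)) : Option Sig × PB A.Q :=
  (none, τ (hs.filterMap Prod.fst) (hs.map Prod.snd))

/-- The nondeterminism in `A` is compliant with the letter games. -/
def NondetCompliant (A : AltAutomaton Sig Gam) : Prop := (eveLetterGame A).EveWins

/-- The universality in `A` is compliant with the letter games. -/
def UnivCompliant (A : AltAutomaton Sig Gam) : Prop := (adamLetterGame A).AdamWins

/-- `A` is compliant with the letter games. -/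
def LetterCompliant (A : AltAutomaton Sig Gam) : Prop := NondetCompliant A ∧ UnivCompliant A

/-- A `Sig`-arena. -/
structure Arena (Sig : Type) : Type 1 where
  V : Type
  X : V → V → Prop
  VE : V → Prop
  C : V → Sig
  v0 : V
  total : ∀ v, ∃ v', X v v'

/-- The game on the arena `R` with winning condition `L`. -/
def arenaGame (R : Arena Sig) (L : Set (ℕ → Sig)) : Game R.V where
  move := R.X
  eve := R.VE
  init := R.v0
  win := fun p => (fun n => R.C (p n)) ∈ L

/-- Moves of the synchronized product `R × A`. -/
def prodMove (R : Arena Sig) (A : AltAutomaton Sig Gam) :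
    (R.V × PB A.Q) → (R.V × PB A.Q) → Prop
  | (v, PB.atom q), (v', b) => R.X v v' ∧ b = A.delta q (R.C v')
  | (v, PB.and b b'), (v', c) => v' = v ∧ (c = b ∨ c = b')
  | (v, PB.or b b'), (v', c) => v' = v ∧ (c = b ∨ c = b')

/-- The synchronized product game `R × A`. -/
def prodGame (R : Arena Sig) (A : AltAutomaton Sig Gam) : Game (R.V × PB A.Q) where
  move := prodMove R A
  eve := fun p => match p.2 with
    | PB.atom _ => R.VE p.1
    | PB.or _ _ => True
    | PB.and _ _ => False
  init := (R.v0, A.delta A.init (R.C R.v0))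
  win := fun p => ∀ ρ : ℕ → A.Q, IsSubseqOn (fun x => x.2.theAtom?) p ρ →
    (fun n => A.label (ρ n)) ∈ A.W

/-- `A` is good for game composition. -/
def GoodForGames (A : AltAutomaton Sig Gam) : Prop :=
  ∀ R : Arena Sig, ((arenaGame R A.lang).EveWins ↔ (prodGame R A).EveWins)

/-- The composition `B × A` of an automaton `B` with `Sig`-labeled states with the
automaton `A` over `Sig`. -/
def compose {Sig' : Type} (B : AltAutomaton Sig' Sig) (A : AltAutomaton Sig Gam) :
    AltAutomaton Sig' Gam where
  Q := B.Q × A.Q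
  init := (B.init, A.init)
  delta := fun p a => (B.delta p.1 a).bind fun qB' =>
    (A.delta p.2 (B.label qB')).bind fun qA' => PB.atom (qB', qA')
  label := fun p => A.label p.2
  W := A.W

/-- `A` is good for automata composition: composing with any alternating automaton `B`
whose acceptance condition is `L(A)` preserves the language. -/
def GoodForAutomata (A : AltAutomaton Sig Gam) : Prop :=
  ∀ (Sig' : Type) (B : AltAutomaton Sig' Sig), B.W = A.lang →
    (compose B A).lang = B.lang

/-- The underlying graph of the arena is a tree rooted at the initial node: every node is
reached from the root by a unique path. -/
def Arena.IsTree (R : Arena Sig) : Prop :=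
  ∀ v : R.V, ∃! l : List R.V,
    l.head? = some R.v0 ∧ l.getLast? = some v ∧ l.Chain' R.X

/-- The arena with ownership of positions reassigned. -/
def Arena.reassign (R : Arena Sig) (E : R.V → Prop) : Arena Sig :=
  { R with VE := E }

/-- A branch of (the tree underlying) an arena. -/
def Arena.Branch (R : Arena Sig) (p : ℕ → R.V) : Prop :=
  p 0 = R.v0 ∧ ∀ n, R.X (p n) (p (n + 1))

/-- `R` is a one-player arena. -/
def Arena.OnePlayer (R : Arena Sig) : Prop := (∀ v, R.VE v) ∨ (∀ v, ¬ R.VE v)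

/-- `A` is good for trees: its universal expansion accepts exactly the trees all of whose
branches are in `L(A)`, and its existential expansion accepts exactly the trees having a
branch in `L(A)`. -/
def GoodForTrees (A : AltAutomaton Sig Gam) : Prop :=
  ∀ R : Arena Sig, R.IsTree →
    (((prodGame (R.reassign fun _ => False) A).EveWins ↔
        ∀ p : ℕ → R.V, R.Branch p → (fun n => R.C (p n)) ∈ A.lang) ∧
     ((prodGame (R.reassign fun _ => True) A).EveWins ↔
        ∃ p : ℕ → R.V, R.Branch p ∧ (fun n => R.C (p n)) ∈ A.lang))

/-- `A` is nondeterministic: all transition conditions are disjunctions of atoms. -/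
def AltAutomaton.IsNondet (A : AltAutomaton Sig Gam) : Prop :=
  ∀ q a, (A.delta q a).IsDisj

/-- `A` is universal: all transition conditions are conjunctions of atoms. -/
def AltAutomaton.IsUniv (A : AltAutomaton Sig Gam) : Prop :=
  ∀ q a, (A.delta q a).IsConj

/-- `A` is deterministic: all transition conditions are atoms. -/
def AltAutomaton.IsDet (A : AltAutomaton Sig Gam) : Prop :=
  ∀ q a, (A.delta q a).IsAtom

/-- The Büchi acceptance set over `Bool`-labelings: `true` occurs infinitely often. -/
def BuchiW : Set (ℕ → Bool) := {x | {n | x n = true}.Infinite}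

/-- The co-Büchi acceptance set over `Bool`-labelings: `false` occurs finitely often. -/
def CoBuchiW : Set (ℕ → Bool) := {x | {n | x n = false}.Finite}

/-- The edge relation of the graph induced by the transition function. -/
def edgeRel (A : AltAutomaton Sig Gam) (q q' : A.Q) : Prop :=
  ∃ a, q' ∈ (A.delta q a).atomsOf

/-- A Büchi automaton (with `Bool` labels) is weak if in every strongly connected component
all states have the same label. -/
def IsWeak (A : AltAutomaton Sig Bool) : Prop :=
  ∀ q q', Relation.ReflTransGen (edgeRel A) q q' → Relation.ReflTransGen (edgeRel A) q' q →
    A.label q = A.label q'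

end GFG
namespace GFG

/-- An alternating automaton over finite words. -/
structure AFA (Sig : Type) : Type 1 where
  Q : Type
  [finQ : Finite Q]
  [neQ : Nonempty Q]
  init : Q
  delta : Q → Sig → PB Q
  F : Set Q

attribute [instance] AFA.finQ AFA.neQ

/-- A finite-duration two-player game: maximal plays end at terminal positions (positions
with no successor), and `winE` tells which terminal positions are winning for Eve. -/
structure FGame (Pos : Type) where
  move : Pos → Pos → Prop
  eve : Pos → Prop
  init : Pos
  winE : Pos → Prop

namespace FGame
variable {Pos : Type} (G : FGame Pos)

/-- A valid finite history. -/
def IsHist (l : List Pos) : Prop := l.head? = some G.init ∧ l.Chain' G.move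

/-- A terminal position. -/
def Terminal (x : Pos) : Prop := ∀ y, ¬ G.move x y

/-- The finite history `l` agrees with Eve's strategy `σ`. -/
def AgreesE (σ : List Pos → Pos) (l : List Pos) : Prop :=
  ∀ i (h : i + 1 < l.length), G.eve (l[i]'(Nat.lt_of_succ_lt h)) →
    l[i + 1]'h = σ (l.take (i + 1))

/-- The finite history `l` agrees with Adam's strategy `σ`. -/
def AgreesA (σ : List Pos → Pos) (l : List Pos) : Prop :=
  ∀ i (h : i + 1 < l.length), ¬ G.eve (l[i]'(Nat.lt_of_succ_lt h)) →
    l[i + 1]'h = σ (l.take (i + 1))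

/-- `σ` is a winning strategy for Eve: it proposes legal moves at Eve's non-terminal
positions, and every maximal play agreeing with it ends in a position winning for Eve. -/
def WinsEve (σ : List Pos → Pos) : Prop :=
  (∀ (l : List Pos) (x : Pos), G.IsHist (l ++ [x]) → G.eve x → ¬ G.Terminal x →
    G.move x (σ (l ++ [x]))) ∧
  (∀ (l : List Pos) (x : Pos), G.IsHist (l ++ [x]) → G.AgreesE σ (l ++ [x]) →
    G.Terminal x → G.winE x)

/-- `σ` is a winning strategy for Adam. -/
def WinsAdam (σ : List Pos → Pos) : Prop :=
  (∀ (l : List Pos) (x : Pos), G.IsHist (l ++ [x]) → ¬ G.eve x → ¬ G.Terminal x →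
    G.move x (σ (l ++ [x]))) ∧
  (∀ (l : List Pos) (x : Pos), G.IsHist (l ++ [x]) → G.AgreesA σ (l ++ [x]) →
    G.Terminal x → ¬ G.winE x)

/-- Eve has a winning strategy. -/
def EveWins : Prop := ∃ σ, G.WinsEve σ

end FGame

variable {Sig : Type}

/-- Moves of the membership game `G(u, A)` of an automaton over finite words. -/
def fmove (A : AFA Sig) (u : List Sig) : (ℕ × PB A.Q) → (ℕ × PB A.Q) → Prop
  | (i, PB.atom q), (j, b) => ∃ a, u[i]? = some a ∧ j = i + 1 ∧ b = A.delta q a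
  | (i, PB.and b b'), (j, c) => j = i ∧ (c = b ∨ c = b')
  | (i, PB.or b b'), (j, c) => j = i ∧ (c = b ∨ c = b')

/-- The membership game `G(u, A)`: its terminal positions are the positions `(|u|, q)` with
`q` a state, and such a position is winning for Eve iff `q ∈ F`. -/
def memGame (A : AFA Sig) (u : List Sig) : FGame (ℕ × PB A.Q) where
  move := fmove A u
  eve := fun p => match p.2 with
    | PB.or _ _ => True
    | _ => False
  init := (0, PB.atom A.init)
  winE := fun p => match p.2 with
    | PB.atom q => p.1 = u.length ∧ q ∈ A.F
    | _ => False

/-- `A` accepts the finite word `u` iff Eve has a winning strategy in `G(u, A)`. -/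
def AFA.Accepts (A : AFA Sig) (u : List Sig) : Prop := (memGame A u).EveWins

/-- The language of an automaton over finite words. -/
def AFA.lang (A : AFA Sig) : Set (List Sig) := {u | A.Accepts u}

/-- The strategy in `G(u, A)` induced by following a uniform strategy `τ`
(at atom positions it takes the unique move). -/
def ffollow (A : AFA Sig) (u : List Sig) (τ : List Sig → List (PB A.Q) → PB A.Q)
    (hs : List (ℕ × PB A.Q)) : ℕ × PB A.Q :=
  match hs.getLast?.getD (0, PB.atom A.init) with
  | (i, PB.atom q) => (i + 1,
      match u[i]? with
      | some a => A.delta q a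
      | none => PB.atom q)
  | (i, PB.and _ _) => (i, τ (u.take i) (hs.map Prod.snd))
  | (i, PB.or _ _) => (i, τ (u.take i) (hs.map Prod.snd))

/-- `A` is GFG: there are uniform strategies resolving the nondeterminism and the
universality on the fly. -/
def AFA.GFG (A : AFA Sig) : Prop :=
  (∃ τ, ∀ u ∈ A.lang, (memGame A u).WinsEve (ffollow A u τ)) ∧
  (∃ τ, ∀ u ∉ A.lang, (memGame A u).WinsAdam (ffollow A u τ))


/-!
Fix uniform strategies `τE`, `τA` witnessing that `A` is GFG and let both players follow them
on a word `u`; this determines the state `q(u)` reached after reading `u`. As `τE` wins when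
`u ∈ L(A)` and `τA` wins when `u ∉ L(A)`, we get `u ∈ L(A) ↔ q(u) ∈ F`. Moreover, if
`q(u) = q(u')`, Eve's play on `u v` and Adam's play on `u' v` can be continued jointly along `v`
to a common final state; if `u v ∈ L(A)` but `u' v ∉ L(A)`, it would lie both in `F` (Eve wins)
and outside `F` (Adam wins). Hence `q` is a right
congruence into the states of `A` that saturates `L(A)`, and reading `q` letter by letter is a
DFA for `L(A)` with the states of `A`.
-/

theorem foldl_take_succ {α β : Type*} {g : α → β → α} {x : α} {l : List β} {n : ℕ} {a : β}
    (ha : l[n]? = some a) : (l.take (n + 1)).foldl g x = g ((l.take n).foldl g x) a := by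
  rw [List.take_add_one, ha]
  simp

theorem getElem?_length_of_prefix {α : Type*} {p v w : List α} {a : α} (h : p ++ a :: v <+: w) :
    w[p.length]? = some a := by
  obtain ⟨t, rfl⟩ := h
  simp

namespace FGame

variable {Pos : Type} {G : FGame Pos} {σ : List Pos → Pos} {l : List Pos} {x y : Pos}

theorem isHist_singleton : G.IsHist [G.init] := ⟨rfl, List.isChain_singleton _⟩

theorem IsHist.snoc (h : G.IsHist (l ++ [x])) (hm : G.move x y) : G.IsHist (l ++ [x] ++ [y]) := by
  refine ⟨by simpa using h.1, ?_⟩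
  rw [List.Chain', List.isChain_append]
  refine ⟨h.2, List.isChain_singleton _, ?_⟩
  simpa using hm

theorem IsHist.of_snoc (h : G.IsHist (l ++ [x] ++ [y])) : G.IsHist (l ++ [x]) ∧ G.move x y := by
  have hc := h.2
  rw [List.Chain', List.isChain_append] at hc
  exact ⟨⟨by simpa using h.1, hc.1⟩, by simpa using hc.2.2⟩

theorem agreesE_singleton : G.AgreesE σ [x] := fun i hi => by simp at hi

theorem agreesA_singleton : G.AgreesA σ [x] := fun i hi => by simp at hi

theorem AgreesE.snoc (h : G.AgreesE σ (l ++ [x])) (hy : G.eve x → y = σ (l ++ [x])) :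
    G.AgreesE σ (l ++ [x] ++ [y]) := by
  intro i hi he
  simp only [List.length_append, List.length_singleton] at hi
  rcases Nat.lt_or_ge (i + 1) (l.length + 1) with hlt | hge
  · have hi' : i + 1 < (l ++ [x]).length := by simpa using hlt
    rw [List.getElem_append_left hi', List.take_append_of_le_length (by simpa using hlt.le)]
    exact h i hi' (by rwa [List.getElem_append_left (by simp; omega)] at he)
  · obtain rfl : i = l.length := by omega
    rw [List.take_left' (by simp)]
    simp only [List.getElem_append_left (by simp : l.length < (l ++ [x]).length),
      List.getElem_concat_length] at he
    simpa using hy he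

/-- Adam's agreement is Eve's agreement in the game with the ownership of positions swapped. -/
theorem AgreesA.snoc (h : G.AgreesA σ (l ++ [x])) (hy : ¬ G.eve x → y = σ (l ++ [x])) :
    G.AgreesA σ (l ++ [x] ++ [y]) :=
  AgreesE.snoc (G := { G with eve := fun p => ¬ G.eve p }) h hy

end FGame

section MembershipGame

variable {A : AFA Sig} {w : List Sig} {τ : List Sig → List (PB A.Q) → PB A.Q}
  {l : List (ℕ × PB A.Q)} {i : ℕ} {b c : PB A.Q}

theorem memGame_terminal (q : A.Q) : (memGame A w).Terminal (w.length, PB.atom q) := by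
  rintro ⟨j, d⟩ ⟨a, ha, -⟩
  simp at ha

theorem ffollow_or : ffollow A w τ (l ++ [(i, PB.or b c)]) =
    (i, τ (w.take i) ((l ++ [(i, PB.or b c)]).map Prod.snd)) := by
  simp [ffollow]

theorem ffollow_and : ffollow A w τ (l ++ [(i, PB.and b c)]) =
    (i, τ (w.take i) ((l ++ [(i, PB.and b c)]).map Prod.snd)) := by
  simp [ffollow]

theorem ffollow_atom {q : A.Q} {a : Sig} (ha : w[i]? = some a) :
    ffollow A w τ (l ++ [(i, PB.atom q)]) = (i + 1, A.delta q a) := by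
  simp [ffollow, ha]

end MembershipGame

section Consistency

variable {A : AFA Sig} {τE τA : List Sig → List (PB A.Q) → PB A.Q} {w p : List Sig}
  {l : List (ℕ × PB A.Q)} {x y : ℕ × PB A.Q} {i : ℕ} {b c d : PB A.Q} {q : A.Q} {a : Sig}

variable (A τE τA) in
/-- Agreement with `τE` is only asked for when `w ∈ L(A)`: only then is `τE` known to propose
legal moves. -/
def EveHist (w : List Sig) (h : List (ℕ × PB A.Q)) : Prop :=
  (memGame A w).IsHist h ∧ (w ∈ A.lang → (memGame A w).AgreesE (ffollow A w τE) h)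

variable (A τE τA) in
def AdamHist (w : List Sig) (h : List (ℕ × PB A.Q)) : Prop :=
  (memGame A w).IsHist h ∧ (w ∉ A.lang → (memGame A w).AgreesA (ffollow A w τA) h)

theorem EveHist.snoc (H : EveHist A τE w (l ++ [x])) (hm : fmove A w x y)
    (hy : w ∈ A.lang → (memGame A w).eve x → y = ffollow A w τE (l ++ [x])) :
    EveHist A τE w (l ++ [x] ++ [y]) :=
  ⟨H.1.snoc hm, fun hw => (H.2 hw).snoc (hy hw)⟩

theorem AdamHist.snoc (H : AdamHist A τA w (l ++ [x])) (hm : fmove A w x y)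
    (hy : w ∉ A.lang → ¬ (memGame A w).eve x → y = ffollow A w τA (l ++ [x])) :
    AdamHist A τA w (l ++ [x] ++ [y]) :=
  ⟨H.1.snoc hm, fun hw => (H.2 hw).snoc (hy hw)⟩

open Classical in
theorem EveHist.snoc_or (hτE : ∀ u ∈ A.lang, (memGame A u).WinsEve (ffollow A u τE))
    (hp : p <+: w) (H : EveHist A τE w (l ++ [(p.length, PB.or b c)])) :
    EveHist A τE w (l ++ [(p.length, PB.or b c)] ++
      [(p.length, if τE p ((l ++ [(p.length, PB.or b c)]).map Prod.snd) = c then c else b)]) := by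
  refine H.snoc ⟨rfl, by split_ifs <;> simp⟩ fun hw _ => ?_
  have hm := (hτE w hw).1 l _ H.1 trivial fun ht => ht (p.length, b) ⟨rfl, Or.inl rfl⟩
  rw [ffollow_or, ← List.prefix_iff_eq_take.mp hp] at hm ⊢
  split_ifs with hx
  · rw [hx]
  · rw [hm.2.resolve_right hx]

open Classical in
theorem AdamHist.snoc_and (hτA : ∀ u ∉ A.lang, (memGame A u).WinsAdam (ffollow A u τA))
    (hp : p <+: w) (H : AdamHist A τA w (l ++ [(p.length, PB.and b c)])) :
    AdamHist A τA w (l ++ [(p.length, PB.and b c)] ++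
      [(p.length, if τA p ((l ++ [(p.length, PB.and b c)]).map Prod.snd) = c then c else b)]) := by
  refine H.snoc ⟨rfl, by split_ifs <;> simp⟩ fun hw _ => ?_
  have hm := (hτA w hw).1 l _ H.1 id fun ht => ht (p.length, b) ⟨rfl, Or.inl rfl⟩
  rw [ffollow_and, ← List.prefix_iff_eq_take.mp hp] at hm ⊢
  split_ifs with hx
  · rw [hx]
  · rw [hm.2.resolve_right hx]

theorem EveHist.snoc_and (H : EveHist A τE w (l ++ [(i, PB.and b c)])) (hd : d = b ∨ d = c) :
    EveHist A τE w (l ++ [(i, PB.and b c)] ++ [(i, d)]) :=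
  H.snoc ⟨rfl, hd⟩ fun _ he => he.elim

theorem AdamHist.snoc_or (H : AdamHist A τA w (l ++ [(i, PB.or b c)])) (hd : d = b ∨ d = c) :
    AdamHist A τA w (l ++ [(i, PB.or b c)] ++ [(i, d)]) :=
  H.snoc ⟨rfl, hd⟩ fun _ he => (he trivial).elim

theorem EveHist.snoc_atom (H : EveHist A τE w (l ++ [(i, PB.atom q)])) (ha : w[i]? = some a) :
    EveHist A τE w (l ++ [(i, PB.atom q)] ++ [(i + 1, A.delta q a)]) :=
  H.snoc ⟨a, ha, rfl, rfl⟩ fun _ he => he.elim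

theorem AdamHist.snoc_atom (H : AdamHist A τA w (l ++ [(i, PB.atom q)])) (ha : w[i]? = some a) :
    AdamHist A τA w (l ++ [(i, PB.atom q)] ++ [(i + 1, A.delta q a)]) :=
  H.snoc ⟨a, ha, rfl, rfl⟩ fun _ _ => (ffollow_atom ha).symm

theorem EveHist.mem_final (hτE : ∀ u ∈ A.lang, (memGame A u).WinsEve (ffollow A u τE))
    (H : EveHist A τE w (l ++ [(w.length, PB.atom q)])) (hw : w ∈ A.lang) : q ∈ A.F :=
  ((hτE w hw).2 l _ H.1 (H.2 hw) (memGame_terminal q)).2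

theorem AdamHist.not_mem_final (hτA : ∀ u ∉ A.lang, (memGame A u).WinsAdam (ffollow A u τA))
    (H : AdamHist A τA w (l ++ [(w.length, PB.atom q)])) (hw : w ∉ A.lang) : q ∉ A.F :=
  fun hq => (hτA w hw).2 l _ H.1 (H.2 hw) (memGame_terminal q) ⟨rfl, hq⟩

end Consistency

/-- Two plays sharing their current formula `b`: one in the membership game of a word with
prefix `pE` read so far, followed by Eve, and one in that of a word with prefix `pA`, followed by
Adam. The histories omit the current positions `(pE.length, b)` and `(pA.length, b)`. -/
structure JointPlay (Q : Type) where
  eveHist : List (ℕ × PB Q)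
  adamHist : List (ℕ × PB Q)

def JointPlay.push {Q : Type} (s : JointPlay Q) (pE pA : List Sig) (b : PB Q) : JointPlay Q :=
  ⟨s.eveHist ++ [(pE.length, b)], s.adamHist ++ [(pA.length, b)]⟩

section JointPlay

variable (A : AFA Sig) (τE τA : List Sig → List (PB A.Q) → PB A.Q)

open Classical in
/-- `τE` resolves disjunctions from Eve's history and `τA` conjunctions from Adam's; a
proposal other than the right child counts as the left child. -/
noncomputable def resolve (pE pA : List Sig) : PB A.Q → JointPlay A.Q → JointPlay A.Q × A.Q
  | .atom q, s => (s, q)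
  | .or b c, s =>
    if τE pE ((s.eveHist ++ [(pE.length, PB.or b c)]).map Prod.snd) = c then
      resolve pE pA c (s.push pE pA (.or b c))
    else resolve pE pA b (s.push pE pA (.or b c))
  | .and b c, s =>
    if τA pA ((s.adamHist ++ [(pA.length, PB.and b c)]).map Prod.snd) = c then
      resolve pE pA c (s.push pE pA (.and b c))
    else resolve pE pA b (s.push pE pA (.and b c))

noncomputable def run (pE pA : List Sig) : List Sig → PB A.Q → JointPlay A.Q → JointPlay A.Q × A.Q
  | [], b, s => resolve A τE τA pE pA b s
  | a :: v, b, s =>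
    let r := resolve A τE τA pE pA b s
    run (pE ++ [a]) (pA ++ [a]) v (A.delta r.2 a) (r.1.push pE pA (.atom r.2))

def Synced (wE wA pE pA : List Sig) (b : PB A.Q) (s : JointPlay A.Q) : Prop :=
  EveHist A τE wE (s.push pE pA b).eveHist ∧ AdamHist A τA wA (s.push pE pA b).adamHist

noncomputable def gfgState (u : List Sig) : A.Q :=
  (run A τE τA [] [] u (.atom A.init) ⟨[], []⟩).2

variable {A τE τA} {wE wA pE pA : List Sig}

theorem synced_resolve (hτE : ∀ u ∈ A.lang, (memGame A u).WinsEve (ffollow A u τE))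
    (hτA : ∀ u ∉ A.lang, (memGame A u).WinsAdam (ffollow A u τA))
    (hpE : pE <+: wE) (hpA : pA <+: wA) (b : PB A.Q) (s : JointPlay A.Q)
    (H : Synced A τE τA wE wA pE pA b s) :
    Synced A τE τA wE wA pE pA (.atom (resolve A τE τA pE pA b s).2)
      (resolve A τE τA pE pA b s).1 := by
  induction b generalizing s with
  | atom q => exact H
  | or b c ihb ihc =>
    have HE := H.1.snoc_or hτE hpE
    simp only [resolve]
    split_ifs at HE ⊢
    · exact ihc _ ⟨HE, H.2.snoc_or (.inr rfl)⟩
    · exact ihb _ ⟨HE, H.2.snoc_or (.inl rfl)⟩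
  | and b c ihb ihc =>
    have HA := H.2.snoc_and hτA hpA
    simp only [resolve]
    split_ifs at HA ⊢
    · exact ihc _ ⟨H.1.snoc_and (.inr rfl), HA⟩
    · exact ihb _ ⟨H.1.snoc_and (.inl rfl), HA⟩

theorem Synced.read {q : A.Q} {a : Sig} {s : JointPlay A.Q}
    (H : Synced A τE τA wE wA pE pA (.atom q) s)
    (hE : wE[pE.length]? = some a) (hA : wA[pA.length]? = some a) :
    Synced A τE τA wE wA (pE ++ [a]) (pA ++ [a]) (A.delta q a) (s.push pE pA (.atom q)) := by
  simp only [Synced, JointPlay.push, List.length_append, List.length_singleton]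
  exact ⟨H.1.snoc_atom hE, H.2.snoc_atom hA⟩

theorem synced_run (hτE : ∀ u ∈ A.lang, (memGame A u).WinsEve (ffollow A u τE))
    (hτA : ∀ u ∉ A.lang, (memGame A u).WinsAdam (ffollow A u τA))
    (v : List Sig) (hpE : pE ++ v <+: wE) (hpA : pA ++ v <+: wA) (b : PB A.Q) (s : JointPlay A.Q)
    (H : Synced A τE τA wE wA pE pA b s) :
    Synced A τE τA wE wA (pE ++ v) (pA ++ v) (.atom (run A τE τA pE pA v b s).2)
      (run A τE τA pE pA v b s).1 := by
  induction v generalizing pE pA b s with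
  | nil =>
    simp only [List.append_nil] at hpE hpA ⊢
    exact synced_resolve hτE hτA hpE hpA b s H
  | cons a v ih =>
    have Hq := synced_resolve hτE hτA ((List.prefix_append _ _).trans hpE)
      ((List.prefix_append _ _).trans hpA) b s H
    have := ih (by simpa using hpE) (by simpa using hpA) _ _
      (Hq.read (getElem?_length_of_prefix hpE) (getElem?_length_of_prefix hpA))
    simp only [List.append_assoc, List.singleton_append] at this
    exact this

end JointPlay

section GfgState

variable {A : AFA Sig} {τE τA : List Sig → List (PB A.Q) → PB A.Q} {wE wA : List Sig}

theorem synced_init : Synced A τE τA wE wA [] [] (.atom A.init) ⟨[], []⟩ :=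
  ⟨⟨FGame.isHist_singleton, fun _ => FGame.agreesE_singleton⟩,
    ⟨FGame.isHist_singleton, fun _ => FGame.agreesA_singleton⟩⟩

theorem synced_gfgState (hτE : ∀ u ∈ A.lang, (memGame A u).WinsEve (ffollow A u τE))
    (hτA : ∀ u ∉ A.lang, (memGame A u).WinsAdam (ffollow A u τA))
    {u : List Sig} (hpE : u <+: wE) (hpA : u <+: wA) :
    Synced A τE τA wE wA u u (.atom (gfgState A τE τA u))
      (run A τE τA [] [] u (.atom A.init) ⟨[], []⟩).1 :=
  synced_run (pE := []) (pA := []) hτE hτA u hpE hpA _ _ synced_init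

theorem mem_lang_iff_gfgState_mem (hτE : ∀ u ∈ A.lang, (memGame A u).WinsEve (ffollow A u τE))
    (hτA : ∀ u ∉ A.lang, (memGame A u).WinsAdam (ffollow A u τA)) (u : List Sig) :
    u ∈ A.lang ↔ gfgState A τE τA u ∈ A.F := by
  have H := synced_gfgState hτE hτA (List.prefix_refl u) (List.prefix_refl u)
  exact ⟨H.1.mem_final hτE, fun hq => by_contra fun hu => H.2.not_mem_final hτA hu hq⟩

theorem mem_lang_of_gfgState_eq (hτE : ∀ u ∈ A.lang, (memGame A u).WinsEve (ffollow A u τE))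
    (hτA : ∀ u ∉ A.lang, (memGame A u).WinsAdam (ffollow A u τA)) {u u' v : List Sig}
    (h : gfgState A τE τA u = gfgState A τE τA u') (hv : u ++ v ∈ A.lang) : u' ++ v ∈ A.lang := by
  by_contra hv'
  have HE := (synced_gfgState hτE hτA (List.prefix_append u v) (List.prefix_append u v)).1
  have HA := (synced_gfgState hτE hτA (List.prefix_append u' v) (List.prefix_append u' v)).2
  rw [← h] at HA
  have H := synced_run hτE hτA v (List.prefix_refl _) (List.prefix_refl _) _
    ⟨(run A τE τA [] [] u (.atom A.init) ⟨[], []⟩).1.eveHist,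
      (run A τE τA [] [] u' (.atom A.init) ⟨[], []⟩).1.adamHist⟩ ⟨HE, HA⟩
  exact H.2.not_mem_final hτA hv' (H.1.mem_final hτE hv)

end GfgState

section Deterministic

variable {D : AFA Sig} {f : D.Q → Sig → D.Q} {u : List Sig}

theorem isHist_snoc_eq_of_atomic (hf : ∀ q a, D.delta q a = .atom (f q a)) :
    ∀ (l : List (ℕ × PB D.Q)) (x : ℕ × PB D.Q), (memGame D u).IsHist (l ++ [x]) →
      x = (l.length, .atom ((u.take l.length).foldl f D.init)) ∧ l.length ≤ u.length := by
  intro l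
  induction l using List.reverseRecOn with
  | nil =>
    intro x h
    simpa [memGame] using h.1
  | append_singleton l y ih =>
    intro x h
    obtain ⟨hy, hm⟩ := h.of_snoc
    obtain ⟨rfl, -⟩ := ih y hy
    obtain ⟨a, ha, hx1, hx2⟩ := id hm
    have hlt : l.length < u.length := by
      by_contra hge
      simp [List.getElem?_eq_none (not_lt.mp hge)] at ha
    refine ⟨?_, by simpa using hlt⟩
    rw [Prod.ext_iff, hx1, hx2, hf]
    simp [foldl_take_succ ha]

theorem AFA.accepts_iff_foldl_mem (hf : ∀ q a, D.delta q a = .atom (f q a)) (u : List Sig) :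
    D.Accepts u ↔ u.foldl f D.init ∈ D.F := by
  constructor
  · rintro ⟨σ, -, hwin⟩
    suffices ∀ n ≤ u.length, ∃ l,
        (memGame D u).IsHist (l ++ [(n, .atom ((u.take n).foldl f D.init))]) ∧
        (memGame D u).AgreesE σ (l ++ [(n, .atom ((u.take n).foldl f D.init))]) by
      obtain ⟨l, hl, hσ⟩ := this u.length le_rfl
      simpa using (hwin l _ hl hσ (memGame_terminal _)).2
    intro n hn
    induction n with
    | zero => exact ⟨[], FGame.isHist_singleton, FGame.agreesE_singleton⟩
    | succ n ih =>
      obtain ⟨l, hl, hσ⟩ := ih (by omega)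
      have ha : u[n]? = some u[n] := List.getElem?_eq_getElem (by omega)
      refine ⟨l ++ [(n, .atom ((u.take n).foldl f D.init))], ?_, hσ.snoc fun he => he.elim⟩
      exact hl.snoc ⟨u[n], ha, rfl, by rw [hf, foldl_take_succ ha]⟩
  · intro hF
    refine ⟨fun _ => (0, .atom D.init), fun l x h he _ => ?_, fun l x h _ ht => ?_⟩
    · rw [(isHist_snoc_eq_of_atomic hf l x h).1] at he
      exact he.elim
    · obtain ⟨rfl, hle⟩ := isHist_snoc_eq_of_atomic hf l x h
      have hlen : l.length = u.length := by
        by_contra hne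
        have ha : u[l.length]? = some u[l.length] := List.getElem?_eq_getElem (by omega)
        exact ht (_, D.delta _ _) ⟨_, ha, rfl, rfl⟩
      exact ⟨hlen, by rwa [hlen, List.take_length]⟩

end Deterministic

section StateMap

variable {Q : Type} [Finite Q] [Nonempty Q]

noncomputable def AFA.ofStateMap (f : List Sig → Q) (F : Set Q) : AFA Sig where
  Q := Q
  init := f []
  delta s a := .atom (f (Function.invFun f s ++ [a]))
  F := F

theorem AFA.lang_ofStateMap {L : Set (List Sig)} {f : List Sig → Q} {F : Set Q}
    (hF : ∀ u, u ∈ L ↔ f u ∈ F) (hres : ∀ u u' v, f u = f u' → u ++ v ∈ L → u' ++ v ∈ L) :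
    (AFA.ofStateMap f F).lang = L := by
  have hrun : ∀ u : List Sig, ∃ w,
      u.foldl (fun s a => f (Function.invFun f s ++ [a])) (f []) = f w ∧
      ∀ v, (w ++ v ∈ L ↔ u ++ v ∈ L) := by
    intro u
    induction u using List.reverseRecOn with
    | nil => exact ⟨[], rfl, fun _ => Iff.rfl⟩
    | append_singleton u a ih =>
      obtain ⟨w, hw, hwu⟩ := ih
      have hrep : f (Function.invFun f (f w)) = f w := Function.invFun_eq ⟨w, rfl⟩
      refine ⟨Function.invFun f (f w) ++ [a], by simp [hw], fun v => ?_⟩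
      simp only [List.append_assoc, List.singleton_append]
      exact ⟨fun h => (hwu _).mp (hres _ _ _ hrep h),
        fun h => hres _ _ _ hrep.symm ((hwu _).mpr h)⟩
  ext u
  obtain ⟨w, hw, hwu⟩ := hrun u
  have hwu := hwu []
  simp only [List.append_nil] at hwu
  change (AFA.ofStateMap f F).Accepts u ↔ u ∈ L
  rw [AFA.accepts_iff_foldl_mem (f := fun s a => f (Function.invFun f s ++ [a])) (fun _ _ => rfl),
    ← hwu, hF, ← hw]
  rfl

end StateMap

theorem statement13_general {Sig : Type} (A : AFA Sig) (h : A.GFG) :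
    ∃ D : AFA Sig, (∀ q a, (D.delta q a).IsAtom) ∧ Nat.card D.Q ≤ Nat.card A.Q ∧
      D.lang = A.lang := by
  obtain ⟨⟨τE, hτE⟩, ⟨τA, hτA⟩⟩ := h
  refine ⟨AFA.ofStateMap (gfgState A τE τA) A.F, fun _ _ => trivial, le_rfl, ?_⟩
  exact AFA.lang_ofStateMap (mem_lang_iff_gfgState_mem hτE hτA)
    fun _ _ _ h => mem_lang_of_gfgState_eq hτE hτA h

/-- For every GFG alternating automaton over finite words with `n` states
there is an equivalent DFA with at most `n` states. -/
theorem statement13 {Sig : Type} [Fintype Sig] [Nonempty Sig] (A : AFA Sig) (h : A.GFG) :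
    ∃ D : AFA Sig, (∀ q a, (D.delta q a).IsAtom) ∧ Nat.card D.Q ≤ Nat.card A.Q ∧
      D.lang = A.lang :=
  statement13_general A h

end GFG
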